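/- arXiv:2503.18285 — 2 statements merged into one kernel-verified Lean document; each statement's English description precedes it below -/
import Mathlib

section
/- Let G = A ⋊ B where A is a finite p-group, B a finite group, and F a field of characteristic p. Then Γ(A) = Aug(FA)·FG is a nilpotent ideal of FG, and V(FG) = (1 + Γ(A)) ⋊ V(FB); that is, 1 + Γ(A) is a normal subgroup of V(FG), V(FB) is a subgroup, their intersection is trivial, and their product is V(FG). -/
open MonoidAlgebra

noncomputable def aug (F : Type*) [CommSemiring F] (G : Type*) [Monoid G] :
    MonoidAlgebra F G →ₐ[F] F := MonoidAlgebra.lift F F G 1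

noncomputable def invo (F : Type*) [CommSemiring F] (G : Type*) [Group G] :
    MonoidAlgebra F G → MonoidAlgebra F G := fun x => MonoidAlgebra.ofCoeff (Finsupp.mapDomain (·⁻¹) x.coeff)

noncomputable def normUnits (F : Type*) [CommSemiring F] (G : Type*) [Monoid G] :
    Subgroup (MonoidAlgebra F G)ˣ :=
  (Units.map (aug F G : MonoidAlgebra F G →* F)).ker

noncomputable def grpUnit (F : Type*) [CommSemiring F] (G : Type*) [Group G] :
    G →* (MonoidAlgebra F G)ˣ where
  toFun g :=
    { val := MonoidAlgebra.of F G g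
      inv := MonoidAlgebra.of F G g⁻¹
      val_inv := by rw [← map_mul, mul_inv_cancel, map_one]
      inv_val := by rw [← map_mul, inv_mul_cancel, map_one] }
  map_one' := Units.ext (map_one (MonoidAlgebra.of F G))
  map_mul' g h := Units.ext (map_mul (MonoidAlgebra.of F G) g h)

/-!
Write `ω(H) = augSubmodule F H` and `Γ(H) = ω(H) * ⊤` for a subgroup `H ≤ G`. For a surjection
`f : G → Q`, the kernel of `F[G] → F[Q]` lies in `Γ(ker f)`, because `x` minus its image under
`F[G] → F[Q] → F[G]`, the second map induced by a set-theoretic section of `f`, lies in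
`Γ(ker f)`. For normal `H`, `F[G] · ω(H) ⊆ ω(H) · F[G]`, so `Γ(H)^k ⊆ ω(H)^k · F[G]`, and `ω(H)`
is the image of the augmentation ideal of `F[H]`. For a finite `p`-group `H` in characteristic `p`
the latter is nilpotent, by induction on `|H|`: a central `z ≠ 1` satisfies
`(z - 1)^(p^k) = z^(p^k) - 1 = 0`, so `Γ(⟨z⟩)` is nilpotent, and the kernel of `F[H] → F[H/⟨z⟩]`
lies in `Γ(⟨z⟩)`.

The decomposition of the unit group is formal: `F[B] → F[A ⋊ B] → F[B]` is the identity and both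
maps preserve augmentation, so `V(F[A ⋊ B])` is the preimage of `V(F[B])`, which splits as the
kernel `1 + Γ(A)` and the image of `V(F[B])`.
-/

theorem Subgroup.normal_of_le_center {G : Type*} [Group G] {H : Subgroup G}
    (hH : H ≤ Subgroup.center G) : H.Normal :=
  ⟨fun n hn g => by rwa [Subgroup.mem_center_iff.mp (hH hn) g, mul_inv_cancel_right]⟩

theorem MonoidHom.ker_inf_map_eq_bot {G Q : Type*} [Group G] [Group Q] {ρ : G →* Q}
    {σ : Q →* G} (h : Function.LeftInverse ρ σ) (K : Subgroup Q) : ρ.ker ⊓ K.map σ = ⊥ := by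
  rw [eq_bot_iff]
  rintro _ ⟨hker, q, -, rfl⟩
  have hq : q = 1 := by rw [← h q]; exact hker
  rw [hq, map_one]
  exact one_mem _

theorem MonoidHom.ker_sup_map_eq_comap {G Q : Type*} [Group G] [Group Q] {ρ : G →* Q}
    {σ : Q →* G} (h : Function.LeftInverse ρ σ) (K : Subgroup Q) :
    ρ.ker ⊔ K.map σ = K.comap ρ := by
  refine le_antisymm (sup_le (ρ.ker_le_comap K) ?_) fun g hg => ?_
  · rintro _ ⟨q, hq, rfl⟩
    rwa [Subgroup.mem_comap, h q]
  · have hσ : σ (ρ g) ∈ K.map σ := ⟨ρ g, hg, rfl⟩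
    have hk : g * (σ (ρ g))⁻¹ ∈ ρ.ker := by simp [h (ρ g)]
    simpa using Subgroup.mul_mem _ (Subgroup.mem_sup_left hk) (Subgroup.mem_sup_right hσ)

theorem Units.mem_map_map_iff {M N : Type*} [Monoid M] [Monoid N] {ρ : M →* N} {σ : N →* M}
    (h : Function.LeftInverse ρ σ) (K : Subgroup Nˣ) {u : Mˣ} :
    u ∈ K.map (Units.map σ) ↔ u ∈ K.comap (Units.map ρ) ∧ (u : M) ∈ Set.range σ := by
  constructor
  · rintro ⟨w, hw, rfl⟩
    refine ⟨?_, w, rfl⟩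
    rwa [Subgroup.mem_comap, show Units.map ρ (Units.map σ w) = w from Units.ext (h w)]
  · rintro ⟨hu, y, hy⟩
    refine ⟨Units.map ρ u, hu, Units.ext ?_⟩
    rw [Units.coe_map, Units.coe_map, ← hy, h y]

namespace Submodule

variable {R A : Type*} [CommSemiring R] [Semiring A] [Algebra R A]

theorem list_prod_mem_pow {M : Submodule R A} :
    ∀ l : List A, (∀ y ∈ l, y ∈ M) → l.prod ∈ M ^ l.length
  | [], _ => by simpa using one_le.mp (le_refl (1 : Submodule R A))
  | a :: l, h => by
    rw [List.prod_cons, List.length_cons, pow_succ']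
    exact mul_mem_mul (h a List.mem_cons_self)
      (list_prod_mem_pow l fun y hy => h y (List.mem_cons_of_mem a hy))

theorem mul_top_pow_le {W : Submodule R A} (hW : ⊤ * W ≤ W * ⊤) :
    ∀ k, (W * ⊤) ^ k ≤ W ^ k * ⊤
  | 0 => by simp
  | k + 1 =>
    calc (W * ⊤) ^ (k + 1) ≤ W ^ k * ⊤ * (W * ⊤) := by
          rw [pow_succ]; exact mul_le_mul' (mul_top_pow_le hW k) le_rfl
      _ = W ^ k * (⊤ * W) * ⊤ := by simp only [mul_assoc]
      _ ≤ W ^ k * (W * ⊤) * ⊤ := by gcongr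
      _ = W ^ (k + 1) * (⊤ * ⊤) := by simp only [pow_succ, mul_assoc]
      _ ≤ W ^ (k + 1) * ⊤ := mul_le_mul' le_rfl le_top

theorem isNilpotent_mul_top {W : Submodule R A} (hW : ⊤ * W ≤ W * ⊤) (hWn : IsNilpotent W) :
    IsNilpotent (W * ⊤) := by
  obtain ⟨k, hk⟩ := hWn
  refine ⟨k, le_bot_iff.mp ?_⟩
  simpa [hk] using mul_top_pow_le hW k

theorem top_mul_span_singleton_le {x : A} (hx : ∀ y, Commute x y) :
    ⊤ * span R {x} ≤ span R {x} * ⊤ := by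
  refine mul_le.mpr fun y _ w hw => ?_
  obtain ⟨c, rfl⟩ := mem_span_singleton.mp hw
  rw [mul_smul_comm, ← (hx y).eq]
  exact smul_mem _ _ (mul_mem_mul (mem_span_singleton_self x) trivial)

theorem isNilpotent_span_singleton {x : A} (hx : IsNilpotent x) : IsNilpotent (span R {x}) := by
  obtain ⟨k, hk⟩ := hx
  exact ⟨k, by rw [span_pow, Set.singleton_pow, hk, span_zero_singleton, zero_eq_bot]⟩

theorem isNilpotent_of_pow_le {I J : Submodule R A} {m : ℕ} (hIJ : I ^ m ≤ J) (hJ : IsNilpotent J) :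
    IsNilpotent I := by
  obtain ⟨k, hk⟩ := hJ
  exact ⟨m * k, le_bot_iff.mp (by simpa [pow_mul, hk] using pow_le_pow_left' hIJ k)⟩

end Submodule

namespace MonoidAlgebra

section Augmentation

variable {F : Type*} [CommSemiring F] {G Q : Type*} [Monoid G] [Monoid Q]

theorem aug_mapDomain (f : G →* Q) (x : MonoidAlgebra F G) :
    aug F Q (mapDomain f x) = aug F G x := by
  have hcomp : (aug F Q).comp (mapDomainAlgHom F F f) = aug F G := by
    ext; simp [aug]
  exact DFunLike.congr_fun hcomp x

theorem normUnits_eq_comap (f : G →* Q) :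
    normUnits F G = (normUnits F Q).comap (Units.map (mapDomainRingHom F f : _ →* _)) := by
  ext u
  simp [normUnits, Units.ext_iff, aug_mapDomain]

theorem leftInverse_mapDomainRingHom {f : G →* Q} {s : Q →* G} (h : Function.LeftInverse f s) :
    Function.LeftInverse (mapDomainRingHom F f) (mapDomainRingHom F s) := fun x => by
  rw [← RingHom.comp_apply, ← mapDomainRingHom_comp, show f.comp s = .id Q from MonoidHom.ext h,
    mapDomainRingHom_id, RingHom.id_apply]

end Augmentation

variable {F : Type*} [CommRing F] {G Q : Type*} [Group G] [Group Q]

variable (F) in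
noncomputable def augSubmodule (H : Subgroup G) : Submodule F (MonoidAlgebra F G) :=
  Submodule.span F (Set.range fun h : H => of F G h - 1)

theorem sub_one_mem_augSubmodule {H : Subgroup G} {h : G} (hh : h ∈ H) :
    of F G h - 1 ∈ augSubmodule F H :=
  Submodule.subset_span ⟨⟨h, hh⟩, rfl⟩

theorem mapDomainAlgHom_of (f : G →* Q) (g : G) :
    mapDomainAlgHom F F f (of F G g) = of F Q (f g) := by
  simp

theorem map_augSubmodule (f : G →* Q) (H : Subgroup G) :
    (augSubmodule F H).map (mapDomainAlgHom F F f).toLinearMap = augSubmodule F (H.map f) := by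
  rw [augSubmodule, augSubmodule, Submodule.map_span, ← Set.range_comp]
  congr 1
  ext y
  simp only [Set.mem_range, Function.comp_apply, AlgHom.toLinearMap_apply, map_sub, map_one,
    mapDomainAlgHom_of, Subtype.exists, Subgroup.mem_map, exists_prop]
  constructor
  · rintro ⟨h, hh, rfl⟩
    exact ⟨f h, ⟨h, hh, rfl⟩, rfl⟩
  · rintro ⟨_, ⟨h, hh, rfl⟩, rfl⟩
    exact ⟨h, hh, rfl⟩

theorem top_mul_augSubmodule_le (H : Subgroup G) [hH : H.Normal] :
    ⊤ * augSubmodule F H ≤ augSubmodule F H * ⊤ := by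
  refine Submodule.mul_le.mpr ?_
  rintro y - w hw
  induction hw using Submodule.span_induction with
  | mem w hw =>
    obtain ⟨⟨h, hh⟩, rfl⟩ := hw
    induction y using MonoidAlgebra.induction_on with
    | of g =>
      have hconj : of F G g * (of F G h - 1) = (of F G (g * h * g⁻¹) - 1) * of F G g := by
        simp only [mul_sub, sub_mul, mul_one, one_mul, ← map_mul, inv_mul_cancel_right]
      rw [hconj]
      exact Submodule.mul_mem_mul (sub_one_mem_augSubmodule (hH.conj_mem h hh g)) trivial
    | add a b ha hb => rw [add_mul]; exact add_mem ha hb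
    | smul r a ha => rw [smul_mul_assoc]; exact Submodule.smul_mem _ r ha
  | zero => rw [mul_zero]; exact zero_mem _
  | add a b _ _ ha hb => rw [mul_add]; exact add_mem ha hb
  | smul r a _ ha => rw [mul_smul_comm]; exact Submodule.smul_mem _ r ha

theorem mem_augSubmodule_ker_mul_top {f : G →* Q} (hf : Function.Surjective f)
    {x : MonoidAlgebra F G} (hx : x ∈ RingHom.ker (mapDomainRingHom F f)) :
    x ∈ augSubmodule F f.ker * ⊤ := by
  set s := Function.surjInv hf
  have hsub : ∀ y : MonoidAlgebra F G,
      y - mapDomain s (mapDomain f y) ∈ augSubmodule F f.ker * ⊤ := by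
    intro y
    induction y using MonoidAlgebra.induction_on with
    | of g =>
      have hg : g * (s (f g))⁻¹ ∈ f.ker := by
        simp [s, Function.surjInv_eq hf]
      have hdecomp : of F G g - mapDomain s (mapDomain f (of F G g))
          = (of F G (g * (s (f g))⁻¹) - 1) * of F G (s (f g)) := by
        simp [sub_mul]
      rw [hdecomp]
      exact Submodule.mul_mem_mul (sub_one_mem_augSubmodule hg) trivial
    | add a b ha hb =>
      rw [mapDomain_add, mapDomain_add, add_sub_add_comm]; exact add_mem ha hb
    | smul r a ha =>
      rw [mapDomain_smul, mapDomain_smul, ← smul_sub]; exact Submodule.smul_mem _ r ha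
  have hx0 : mapDomain f x = 0 := RingHom.mem_ker.mp hx
  simpa [hx0] using hsub x

theorem augSubmodule_zpowers_le {g : G} (hg : IsOfFinOrder g) :
    augSubmodule F (Subgroup.zpowers g) ≤ Submodule.span F {of F G g - 1} * ⊤ := by
  refine Submodule.span_le.mpr ?_
  rintro _ ⟨⟨h, hh⟩, rfl⟩
  obtain ⟨n, rfl⟩ := hg.mem_powers_iff_mem_zpowers.mpr hh
  change of F G (g ^ n) - 1 ∈ _
  rw [map_pow, ← mul_geom_sum]
  exact Submodule.mul_mem_mul (Submodule.mem_span_singleton_self _) trivial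

theorem isNilpotent_augSubmodule_top_of_quotient (N : Subgroup G) [N.Normal]
    (hQ : IsNilpotent (augSubmodule F (⊤ : Subgroup (G ⧸ N))))
    (hN : IsNilpotent (augSubmodule F N * ⊤)) :
    IsNilpotent (augSubmodule F (⊤ : Subgroup G)) := by
  obtain ⟨m, hm⟩ := hQ
  refine Submodule.isNilpotent_of_pow_le (m := m) (fun x hx => ?_) hN
  have hπ : (augSubmodule F (⊤ : Subgroup G) ^ m).map
      (mapDomainAlgHom F F (QuotientGroup.mk' N)).toLinearMap = ⊥ := by
    rw [Submodule.map_pow, map_augSubmodule,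
      Subgroup.map_top_of_surjective _ (QuotientGroup.mk'_surjective N), hm, Submodule.zero_eq_bot]
  have hxker : x ∈ RingHom.ker (mapDomainRingHom F (QuotientGroup.mk' N)) :=
    (Submodule.mem_bot F).mp (hπ ▸ Submodule.mem_map_of_mem hx)
  simpa using mem_augSubmodule_ker_mul_top (QuotientGroup.mk'_surjective N) hxker

variable {p : ℕ} [Fact p.Prime] [CharP F p]

theorem isNilpotent_of_sub_one_of_pow_eq_one {g : G} {k : ℕ} (hg : g ^ p ^ k = 1) :
    IsNilpotent (of F G g - 1) := by
  have : CharP (MonoidAlgebra F G) p := charP_of_injective_algebraMap' F p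
  refine ⟨p ^ k, ?_⟩
  rw [sub_pow_char_pow_of_commute (p := p) (h := Commute.one_right _), one_pow, ← map_pow, hg,
    map_one, sub_self]

theorem isNilpotent_augSubmodule_zpowers_mul_top {z : G} (hz : z ∈ Subgroup.center G) {k : ℕ}
    (hzk : z ^ p ^ k = 1) : IsNilpotent (augSubmodule F (Subgroup.zpowers z) * ⊤) := by
  have hcomm : ∀ y, Commute (of F G z - 1) y := fun y =>
    (of_commute (fun g => (Subgroup.mem_center_iff.mp hz g).symm) y).sub_left (Commute.one_left y)
  have hfin : IsOfFinOrder z :=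
    isOfFinOrder_iff_pow_eq_one.mpr ⟨p ^ k, pow_pos (Fact.out : p.Prime).pos k, hzk⟩
  refine Submodule.isNilpotent_of_pow_le (m := 1) ?_
    (Submodule.isNilpotent_mul_top (Submodule.top_mul_span_singleton_le hcomm)
      (Submodule.isNilpotent_span_singleton (isNilpotent_of_sub_one_of_pow_eq_one hzk)))
  calc (augSubmodule F (Subgroup.zpowers z) * ⊤) ^ 1
      ≤ Submodule.span F {of F G z - 1} * ⊤ * ⊤ := by
        rw [pow_one]; exact mul_le_mul' (augSubmodule_zpowers_le hfin) le_rfl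
    _ ≤ Submodule.span F {of F G z - 1} * ⊤ := by
        rw [mul_assoc]; exact mul_le_mul' le_rfl le_top

theorem isNilpotent_augSubmodule_top_of_isPGroup {A : Type*} [Group A] [Finite A]
    (hA : IsPGroup p A) : IsNilpotent (augSubmodule F (⊤ : Subgroup A)) := by
  induction hcard : Nat.card A using Nat.strong_induction_on generalizing A with
  | _ n ih =>
  rcases subsingleton_or_nontrivial A with hA1 | hA1
  · refine ⟨1, ?_⟩
    rw [pow_one, augSubmodule, Submodule.zero_eq_bot, Submodule.span_eq_bot]
    rintro _ ⟨⟨a, -⟩, rfl⟩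
    change of F A a - 1 = 0
    rw [Subsingleton.elim a 1, map_one, sub_self]
  · have := hA.center_nontrivial
    obtain ⟨⟨z, hz⟩, hz1⟩ := exists_ne (1 : Subgroup.center A)
    obtain ⟨k, hzk⟩ := hA z
    have := Subgroup.normal_of_le_center (Subgroup.zpowers_le.mpr hz)
    refine isNilpotent_augSubmodule_top_of_quotient (Subgroup.zpowers z)
      (ih _ ?_ (hA.to_quotient _) rfl) (isNilpotent_augSubmodule_zpowers_mul_top hz hzk)
    rw [← hcard, Subgroup.card_eq_card_quotient_mul_card_subgroup (Subgroup.zpowers z)]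
    refine lt_mul_of_one_lt_right Nat.card_pos ((Subgroup.one_lt_card_iff_ne_bot _).mpr ?_)
    exact Subgroup.zpowers_ne_bot.mpr fun h => hz1 (Subtype.ext h)

theorem isNilpotent_augSubmodule_mul_top_of_isPGroup {H : Subgroup G} [H.Normal] [Finite H]
    (hH : IsPGroup p H) : IsNilpotent (augSubmodule F H * ⊤) := by
  refine Submodule.isNilpotent_mul_top (top_mul_augSubmodule_le H) ?_
  obtain ⟨k, hk⟩ := isNilpotent_augSubmodule_top_of_isPGroup (F := F) hH
  refine ⟨k, ?_⟩
  have hmap := congrArg (Submodule.map (mapDomainAlgHom F F H.subtype).toLinearMap) hk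
  rwa [Submodule.map_pow, map_augSubmodule, ← MonoidHom.range_eq_map, Subgroup.range_subtype,
    Submodule.zero_eq_bot, Submodule.map_bot, ← Submodule.zero_eq_bot] at hmap

theorem exists_ofFn_prod_eq_zero_of_mem_ker {f : G →* Q} (hf : Function.Surjective f)
    [Finite f.ker] (hker : IsPGroup p f.ker) :
    ∃ k : ℕ, 0 < k ∧ ∀ x : Fin k → MonoidAlgebra F G,
      (∀ i, x i ∈ RingHom.ker (mapDomainRingHom F f)) → (List.ofFn x).prod = 0 := by
  obtain ⟨k, hk⟩ := isNilpotent_augSubmodule_mul_top_of_isPGroup (F := F) hker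
  refine ⟨k + 1, k.succ_pos, fun x hx => ?_⟩
  have hprod := Submodule.list_prod_mem_pow (List.ofFn x) fun y hy => by
    obtain ⟨i, rfl⟩ := List.mem_ofFn.mp hy
    exact mem_augSubmodule_ker_mul_top hf (hx i)
  rw [List.length_ofFn, pow_succ, hk, zero_mul, Submodule.zero_eq_bot] at hprod
  exact (Submodule.mem_bot F).mp hprod

end MonoidAlgebra

theorem stmt10_general (p : ℕ) (hp : p.Prime)
    (F : Type*) [Field F] (hchar : ringChar F = p)
    (A : Type*) [Group A] [Finite A] (hA : IsPGroup p A)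
    (B : Type*) [Group B] (φ : B →* MulAut A) :
    (∃ k : ℕ, 0 < k ∧ ∀ x : Fin k → MonoidAlgebra F (A ⋊[φ] B),
      (∀ i, x i ∈ RingHom.ker (MonoidAlgebra.mapDomainRingHom F
        (SemidirectProduct.rightHom : A ⋊[φ] B →* B))) → (List.ofFn x).prod = 0) ∧
    ∃ N VB : Subgroup (MonoidAlgebra F (A ⋊[φ] B))ˣ,
      (N : Set (MonoidAlgebra F (A ⋊[φ] B))ˣ) =
        {u : (MonoidAlgebra F (A ⋊[φ] B))ˣ | (u : MonoidAlgebra F (A ⋊[φ] B)) - 1 ∈ RingHom.ker (MonoidAlgebra.mapDomainRingHom F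
          (SemidirectProduct.rightHom : A ⋊[φ] B →* B))} ∧
      (VB : Set (MonoidAlgebra F (A ⋊[φ] B))ˣ) =
        {u : (MonoidAlgebra F (A ⋊[φ] B))ˣ | u ∈ normUnits F (A ⋊[φ] B) ∧ (u : MonoidAlgebra F (A ⋊[φ] B)) ∈
          Set.range (MonoidAlgebra.mapDomainRingHom F (SemidirectProduct.inr : B →* A ⋊[φ] B))} ∧
      N ≤ normUnits F (A ⋊[φ] B) ∧
      (∀ v ∈ normUnits F (A ⋊[φ] B), ∀ x ∈ N, v * x * v⁻¹ ∈ N) ∧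
      N ⊓ VB = ⊥ ∧ N ⊔ VB = normUnits F (A ⋊[φ] B) := by
  have : Fact p.Prime := ⟨hp⟩
  have : CharP F p := ringChar.of_eq hchar
  have hker : IsPGroup p (SemidirectProduct.rightHom : A ⋊[φ] B →* B).ker := by
    rw [← SemidirectProduct.range_inl_eq_ker_rightHom]
    exact hA.of_surjective _ SemidirectProduct.inl.rangeRestrict_surjective
  have : Finite (SemidirectProduct.rightHom : A ⋊[φ] B →* B).ker := by
    rw [← SemidirectProduct.range_inl_eq_ker_rightHom]
    exact Finite.of_surjective _ SemidirectProduct.inl.rangeRestrict_surjective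
  have hnorm := normUnits_eq_comap (F := F) (SemidirectProduct.rightHom : A ⋊[φ] B →* B)
  have hρσ := leftInverse_mapDomainRingHom (F := F) (SemidirectProduct.rightHom_inr (φ := φ))
  set ρ := mapDomainRingHom F (SemidirectProduct.rightHom : A ⋊[φ] B →* B)
  set σ := mapDomainRingHom F (SemidirectProduct.inr : B →* A ⋊[φ] B)
  have hunits : Function.LeftInverse (Units.map ρ.toMonoidHom)
      (Units.map σ.toMonoidHom) := fun u => Units.ext (hρσ u)
  refine ⟨exists_ofFn_prod_eq_zero_of_mem_ker SemidirectProduct.rightHom_surjective hker,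
    (Units.map ρ.toMonoidHom).ker,
    (normUnits F B).map (Units.map σ.toMonoidHom), ?_, ?_, ?_,
    fun v _ x hx => (MonoidHom.normal_ker _).conj_mem x hx v,
    MonoidHom.ker_inf_map_eq_bot hunits _, ?_⟩
  · ext u
    simp only [SetLike.mem_coe, MonoidHom.mem_ker, Set.mem_ofPred_eq, RingHom.mem_ker, map_sub,
      map_one, sub_eq_zero, Units.ext_iff, Units.coe_map, Units.val_one]
    rfl
  · ext u
    rw [SetLike.mem_coe, Units.mem_map_map_iff hρσ, hnorm]
    rfl
  · rw [hnorm]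
    exact MonoidHom.ker_le_comap _ _
  · rw [hnorm]
    exact MonoidHom.ker_sup_map_eq_comap hunits _

theorem stmt10 (p : ℕ) (hp : p.Prime)
    (F : Type*) [Field F] (hchar : ringChar F = p)
    (A : Type*) [Group A] [Finite A] (hA : IsPGroup p A)
    (B : Type*) [Group B] [Finite B] (φ : B →* MulAut A) :
    (∃ k : ℕ, 0 < k ∧ ∀ x : Fin k → MonoidAlgebra F (A ⋊[φ] B),
      (∀ i, x i ∈ RingHom.ker (MonoidAlgebra.mapDomainRingHom F
        (SemidirectProduct.rightHom : A ⋊[φ] B →* B))) → (List.ofFn x).prod = 0) ∧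
    ∃ N VB : Subgroup (MonoidAlgebra F (A ⋊[φ] B))ˣ,
      (N : Set (MonoidAlgebra F (A ⋊[φ] B))ˣ) =
        {u : (MonoidAlgebra F (A ⋊[φ] B))ˣ | (u : MonoidAlgebra F (A ⋊[φ] B)) - 1 ∈ RingHom.ker (MonoidAlgebra.mapDomainRingHom F
          (SemidirectProduct.rightHom : A ⋊[φ] B →* B))} ∧
      (VB : Set (MonoidAlgebra F (A ⋊[φ] B))ˣ) =
        {u : (MonoidAlgebra F (A ⋊[φ] B))ˣ | u ∈ normUnits F (A ⋊[φ] B) ∧ (u : MonoidAlgebra F (A ⋊[φ] B)) ∈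
          Set.range (MonoidAlgebra.mapDomainRingHom F (SemidirectProduct.inr : B →* A ⋊[φ] B))} ∧
      N ≤ normUnits F (A ⋊[φ] B) ∧
      (∀ v ∈ normUnits F (A ⋊[φ] B), ∀ x ∈ N, v * x * v⁻¹ ∈ N) ∧
      N ⊓ VB = ⊥ ∧ N ⊔ VB = normUnits F (A ⋊[φ] B) :=
  stmt10_general p hp F hchar A hA B φ
end

section
/- Let G = A ⋊ ⟨b⟩ with A a finite abelian p-group and b of odd prime order q ≠ p, and F a field of characteristic p. Then the centralizer C_{1+Γ(A)}(b) of b in 1 + Γ(A) is an abelian group. -/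
open MonoidAlgebra

/-! Let `G = A ⋊ B`. An element of `F[G]` commuting with `b`, hence with all of `B = ⟨b⟩`, has
coefficients that are constant on the orbits of `B` acting on `G` by conjugation. For two such
elements `u`, `v`, the map `(g₁, g₂) ↦ (g₁.right • g₂, g₂.right⁻¹ • g₁)`, where `•` is
conjugation, is an involution of `G × G` that preserves the product `g₁ g₂` (as `A` and `B` are
abelian) and carries `supp u × supp v` onto `supp v × supp u`. Reindexing the double sum for `u v`
along it gives `v u`. -/

namespace MonoidAlgebra

theorem mul_eq_sum_support_product {k M : Type*} [Semiring k] [Monoid M] (x y : k[M]) :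
    x * y = ∑ g ∈ x.coeff.support ×ˢ y.coeff.support,
      single (g.1 * g.2) (x.coeff g.1 * y.coeff g.2) := by
  rw [mul_def, Finset.sum_product]
  rfl

theorem coeff_conj_of_commute_of {k G : Type*} [Semiring k] [Group G] {x : k[G]} {g : G}
    (hx : Commute x (of k G g)) (h : G) :
    x.coeff (MulAut.conj g h) = x.coeff h := by
  simpa [mul_assoc] using congrArg (fun y : k[G] => y.coeff (g * h)) hx.eq

theorem commute_of_zpow_of_commute_grpUnit {k G : Type*} [CommSemiring k] [Group G]
    {x : (k[G])ˣ} {g : G}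
    (hx : Commute x (grpUnit k G g)) (n : ℤ) : Commute (x : k[G]) (of k G (g ^ n)) := by
  have hxn := (hx.zpow_right n).units_val
  rwa [← map_zpow] at hxn

end MonoidAlgebra

namespace SemidirectProduct

variable {A B : Type*} [CommGroup A] [Group B] {φ : B →* MulAut A}

@[simp]
theorem left_conj_inr (c : B) (g : A ⋊[φ] B) : (MulAut.conj (inr c) g).left = φ c g.left := by
  simp [MulAut.conj_apply]

def conjSwap (g : (A ⋊[φ] B) × (A ⋊[φ] B)) : (A ⋊[φ] B) × (A ⋊[φ] B) :=
  (MulAut.conj (inr g.1.right) g.2, MulAut.conj (inr g.2.right⁻¹) g.1)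

variable [IsMulCommutative B]

@[simp]
theorem right_conj_inr (c : B) (g : A ⋊[φ] B) : (MulAut.conj (inr c) g).right = g.right := by
  simp [MulAut.conj_apply, Std.Commutative.comm c g.right]

theorem conjSwap_involutive : Function.Involutive (conjSwap (φ := φ)) := by
  rintro ⟨g₁, g₂⟩
  simp only [conjSwap, right_conj_inr]
  simp [mul_assoc]

theorem conjSwap_fst_mul_snd (g : (A ⋊[φ] B) × (A ⋊[φ] B)) :
    (conjSwap g).1 * (conjSwap g).2 = g.1 * g.2 := by
  ext
  · simp only [conjSwap, mul_left, left_conj_inr, right_conj_inr, ← MulAut.mul_apply, ← map_mul,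
      mul_inv_cancel, map_one, MulAut.one_apply, mul_comm]
  · simp only [conjSwap, mul_right, right_conj_inr, Std.Commutative.comm g.1.right]

theorem commute_of_coeff_conj_inr {k : Type*} [CommSemiring k] {u v : k[A ⋊[φ] B]}
    (hu : ∀ c g, u.coeff (MulAut.conj (inr c) g) = u.coeff g)
    (hv : ∀ c g, v.coeff (MulAut.conj (inr c) g) = v.coeff g) : Commute u v := by
  rw [Commute, SemiconjBy, mul_eq_sum_support_product, mul_eq_sum_support_product]
  refine Finset.sum_equiv (conjSwap_involutive.toPerm _) (fun g => ?_) fun g _ => ?_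
  · simp only [Function.Involutive.coe_toPerm, conjSwap, Finset.mem_product,
      Finsupp.mem_support_iff, hu, hv, and_comm]
  · simp only [Function.Involutive.coe_toPerm, conjSwap_fst_mul_snd]
    simp only [conjSwap, hu, hv, mul_comm]

end SemidirectProduct

theorem stmt13_general
    (F : Type*) [Field F]
    (A : Type*) [CommGroup A]
    (B : Type*) [Group B] (b : B) (hb : ∀ g : B, g ∈ Subgroup.zpowers b)
    (φ : B →* MulAut A) :
    ∀ x y : (MonoidAlgebra F (A ⋊[φ] B))ˣ,
      (x : MonoidAlgebra F (A ⋊[φ] B)) - 1 ∈ RingHom.ker (MonoidAlgebra.mapDomainRingHom F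
        (SemidirectProduct.rightHom : A ⋊[φ] B →* B)) →
      (y : MonoidAlgebra F (A ⋊[φ] B)) - 1 ∈ RingHom.ker (MonoidAlgebra.mapDomainRingHom F
        (SemidirectProduct.rightHom : A ⋊[φ] B →* B)) →
      Commute x (grpUnit F (A ⋊[φ] B) (SemidirectProduct.inr b)) →
      Commute y (grpUnit F (A ⋊[φ] B) (SemidirectProduct.inr b)) →
      Commute x y := by
  intro x y _ _ hx hy
  have : IsCyclic B := ⟨b, fun c => Subgroup.mem_zpowers_iff.mp (hb c)⟩
  have coeff_conj_inr {z : (F[A ⋊[φ] B])ˣ} (hz : Commute z (grpUnit F _ (.inr b))) (c : B)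
      (g : A ⋊[φ] B) :
      (z : F[A ⋊[φ] B]).coeff (MulAut.conj (.inr c) g) = (z : F[A ⋊[φ] B]).coeff g := by
    obtain ⟨n, rfl⟩ := Subgroup.mem_zpowers_iff.mp (hb c)
    rw [map_zpow]
    exact coeff_conj_of_commute_of (commute_of_zpow_of_commute_grpUnit hz n) g
  exact .units_of_val
    (SemidirectProduct.commute_of_coeff_conj_inr (coeff_conj_inr hx) (coeff_conj_inr hy))

theorem stmt13 (p q : ℕ) (hp : p.Prime) (hq : q.Prime) (hqodd : Odd q) (hqp : q ≠ p)
    (F : Type*) [Field F] (hchar : ringChar F = p)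
    (A : Type*) [CommGroup A] [Finite A] (hA : IsPGroup p A)
    (B : Type*) [Group B] (b : B) (hb : ∀ g : B, g ∈ Subgroup.zpowers b) (hbord : orderOf b = q)
    (φ : B →* MulAut A) :
    ∀ x y : (MonoidAlgebra F (A ⋊[φ] B))ˣ,
      (x : MonoidAlgebra F (A ⋊[φ] B)) - 1 ∈ RingHom.ker (MonoidAlgebra.mapDomainRingHom F
        (SemidirectProduct.rightHom : A ⋊[φ] B →* B)) →
      (y : MonoidAlgebra F (A ⋊[φ] B)) - 1 ∈ RingHom.ker (MonoidAlgebra.mapDomainRingHom F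
        (SemidirectProduct.rightHom : A ⋊[φ] B →* B)) →
      Commute x (grpUnit F (A ⋊[φ] B) (SemidirectProduct.inr b)) →
      Commute y (grpUnit F (A ⋊[φ] B) (SemidirectProduct.inr b)) →
      Commute x y :=
  stmt13_general F A B b hb φ
end
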